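/- arXiv:0901.3691 — 4 statements merged into one kernel-verified Lean document; each statement's English description precedes it below -/
import Mathlib

section
/- For any positive integers n, a, b with gcd(a, b) = 1 and gcd(n!, b) = 1, n! divides the product (a+b)(a+2b)···(a+nb). -/
/-!
Since `b` is invertible modulo `n!`, we have `a + b * i ≡ b * (x + i) (mod n!)` with
`x ≡ b⁻¹ * a`, so the product is `b ^ n` times a product of `n` consecutive integers, and
`n!` divides any such product.
-/

open Finset

lemma prod_Icc_add_eq_ascFactorial (x : ℕ) : ∀ k : ℕ,
    ∏ i ∈ Icc 1 k, (x + i) = (x + 1).ascFactorial k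
  | 0 => by simp
  | k + 1 => by
    rw [prod_Icc_succ_top (Nat.le_add_left 1 k), prod_Icc_add_eq_ascFactorial x k,
      Nat.ascFactorial_succ, mul_comm]
    ring_nf

lemma factorial_dvd_prod_Icc_add (x k : ℕ) : k.factorial ∣ ∏ i ∈ Icc 1 k, (x + i) := by
  rw [prod_Icc_add_eq_ascFactorial]
  exact Nat.factorial_dvd_ascFactorial _ _

lemma ZMod.prod_Icc_add_mul_eq_pow_mul {m : ℕ} [NeZero m] {b : ℕ} (hb : b.Coprime m)
    (a k : ℕ) :
    ∃ x : ℕ, ∏ i ∈ Icc 1 k, ((a + b * i : ℕ) : ZMod m) =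
      (b : ZMod m) ^ k * ((∏ i ∈ Icc 1 k, (x + i) : ℕ) : ZMod m) := by
  obtain ⟨u, hu⟩ : ∃ u : (ZMod m)ˣ, (u : ZMod m) = b := ⟨_, ZMod.coe_unitOfCoprime b hb⟩
  refine ⟨((u⁻¹ : (ZMod m)ˣ) * (a : ZMod m)).val, ?_⟩
  have hterm : ∀ i ∈ Icc 1 k, ((a + b * i : ℕ) : ZMod m) =
      b * ((((u⁻¹ : (ZMod m)ˣ) * (a : ZMod m)).val + i : ℕ) : ZMod m) := by
    intro i _
    push_cast
    rw [ZMod.natCast_zmod_val, mul_add, ← mul_assoc, ← hu, Units.mul_inv, one_mul]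
  rw [prod_congr rfl hterm, prod_mul_distrib, prod_const, Nat.card_Icc, Nat.add_sub_cancel,
    Nat.cast_prod]

lemma factorial_dvd_prod_Icc_add_mul {b : ℕ} (k a : ℕ) (hb : b.Coprime k.factorial) :
    k.factorial ∣ ∏ i ∈ Icc 1 k, (a + b * i) := by
  have : NeZero k.factorial := ⟨k.factorial_ne_zero⟩
  obtain ⟨x, hx⟩ := ZMod.prod_Icc_add_mul_eq_pow_mul hb a k
  rw [← ZMod.natCast_eq_zero_iff, Nat.cast_prod, hx,
    (ZMod.natCast_eq_zero_iff _ _).mpr (factorial_dvd_prod_Icc_add x k), mul_zero]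

theorem stmt1_general (n a b : ℕ) (hnb : Nat.gcd n.factorial b = 1) :
    n.factorial ∣ ∏ i ∈ Finset.Icc 1 n, (a + b * i) :=
  factorial_dvd_prod_Icc_add_mul n a (Nat.Coprime.symm hnb)

theorem stmt1 (n a b : ℕ) (hn : 0 < n) (ha : 0 < a) (hb : 0 < b)
    (hab : Nat.gcd a b = 1) (hnb : Nat.gcd n.factorial b = 1) :
    n.factorial ∣ ∏ i ∈ Finset.Icc 1 n, (a + b * i) :=
  stmt1_general n a b hnb
end

section
/- For any positive integers n, a, b with gcd(a, b) = 1 and gcd(n!, b) = 1, and any prime p dividing n!, the p-adic valuation of (a+b)(a+2b)···(a+nb)/n! is at most max_{1 ≤ i ≤ n} v_p(a + b·i), where v_p denotes the p-adic valuation. -/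
/-!
Write `M = max_i v_p(a + b i)`. Counting prime powers,
`v_p(∏ (a + b i)) = ∑_{1 ≤ j ≤ M} #{i ≤ n | p^j ∣ a + b i}`. As `p ∤ b`, the indices `i` with
`p^j ∣ a + b i` lie in a single residue class mod `p^j`, so there are at most `n / p^j + 1` of
them; by Legendre's formula the sum is then at most `v_p(n!) + M`. The quotient is exact because
`b` is invertible mod `n!`, which makes the product congruent to `b^n (c+1)(c+2)⋯(c+n)`.
-/

open Finset Nat

lemma card_le_div_add_one_of_modEq {s : Finset ℕ} {n q : ℕ} (hs : ∀ x ∈ s, x ≤ n)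
    (hmod : ∀ x ∈ s, ∀ y ∈ s, x ≡ y [MOD q]) : #s ≤ n / q + 1 := by
  have hinj : Set.InjOn (· / q) s := fun x hx y hy hxy => by
    rw [← div_add_mod x q, ← div_add_mod y q, hmod x hx y hy]
    exact congrArg (q * · + y % q) hxy
  simpa using card_le_card_of_injOn (· / q) (t := range (n / q + 1))
    (fun x hx => mem_range_succ_iff.mpr (Nat.div_le_div_right (hs x hx))) hinj

lemma card_filter_dvd_add_mul_le (n a b q : ℕ) (hqb : Coprime q b) :
    #{i ∈ Icc 1 n | q ∣ a + b * i} ≤ n / q + 1 := by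
  refine card_le_div_add_one_of_modEq (fun i hi => (mem_Icc.mp (mem_filter.mp hi).1).2) ?_
  intro x hx y hy
  have hxy : a + b * x ≡ a + b * y [MOD q] :=
    (modEq_zero_iff_dvd.mpr (mem_filter.mp hx).2).trans
      (modEq_zero_iff_dvd.mpr (mem_filter.mp hy).2).symm
  exact (ModEq.add_left_cancel' a hxy).cancel_left_of_coprime hqb

lemma exists_mul_modEq_of_coprime {b m : ℕ} (hb : Coprime b m) (a : ℕ) :
    ∃ c, b * c ≡ a [MOD m] := by
  rcases eq_or_ne m 0 with rfl | hm
  · exact ⟨a, by simp_all [Nat.ModEq]⟩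
  have : NeZero m := ⟨hm⟩
  refine ⟨((b : ZMod m)⁻¹ * a).val, (ZMod.natCast_eq_natCast_iff _ _ _).mp ?_⟩
  rw [Nat.cast_mul, ZMod.natCast_zmod_val, ← mul_assoc,
    ZMod.mul_inv_of_unit _ ((ZMod.isUnit_iff_coprime b m).mpr hb), one_mul]

lemma factorial_dvd_prod_add_mul (n a b : ℕ) (hnb : Coprime n ! b) :
    n ! ∣ ∏ i ∈ Icc 1 n, (a + b * i) := by
  obtain ⟨c, hc⟩ := exists_mul_modEq_of_coprime hnb.symm a
  have hprod : ∏ i ∈ Icc 1 n, (a + b * i) ≡ b ^ n * (c + 1).ascFactorial n [MOD n !] :=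
    calc ∏ i ∈ Icc 1 n, (a + b * i)
        ≡ ∏ i ∈ Icc 1 n, b * (c + i) [MOD n !] :=
          ModEq.prod fun i _ => by rw [mul_add]; exact hc.symm.add_right _
      _ = b ^ n * (c + 1).ascFactorial n := by
          rw [prod_mul_distrib, prod_const, card_Icc, add_tsub_cancel_right,
            ascFactorial_eq_prod_range, ← Ico_add_one_right_eq_Icc, prod_Ico_eq_prod_range,
            add_tsub_cancel_right]
          simp only [add_assoc]
  exact modEq_zero_iff_dvd.mp (hprod.trans (modEq_zero_iff_dvd.mpr
    (dvd_mul_of_dvd_right (factorial_dvd_ascFactorial _ _) _)))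

section
variable {p : ℕ} [Fact p.Prime]

lemma padicValNat_finset_prod {ι : Type*} {s : Finset ι} {f : ι → ℕ}
    (hf : ∀ i ∈ s, f i ≠ 0) :
    padicValNat p (∏ i ∈ s, f i) = ∑ i ∈ s, padicValNat p (f i) := by
  simp only [← factorization_def _ Fact.out, factorization_prod hf, Finsupp.finsetSum_apply]

lemma padicValNat_eq_card_pow_dvd {m b : ℕ} (hm : m ≠ 0) (hb : padicValNat p m < b) :
    padicValNat p m = #{j ∈ Ico 1 b | p ^ j ∣ m} := by
  have : {j ∈ Ico 1 b | p ^ j ∣ m} = Icc 1 (padicValNat p m) := by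
    ext j
    simp only [mem_filter, mem_Ico, mem_Icc, padicValNat_dvd_iff_le hm]
    omega
  simp [this]

lemma sum_Ico_div_pow_le_padicValNat_factorial (n b : ℕ) :
    ∑ j ∈ Ico 1 b, n / p ^ j ≤ padicValNat p n ! := by
  rw [padicValNat_factorial (lt_max_of_lt_right (lt_add_one (log p n)) : log p n < max b _)]
  exact sum_le_sum_of_subset (Ico_subset_Ico_right (le_max_left _ _))

lemma padicValNat_prod_le_factorial_add_sup {ι : Type*} (s : Finset ι) (f : ι → ℕ) (n : ℕ)
    (hcount : ∀ j, #{i ∈ s | p ^ j ∣ f i} ≤ n / p ^ j + 1) :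
    padicValNat p (∏ i ∈ s, f i) ≤ padicValNat p n ! + s.sup (fun i => padicValNat p (f i)) := by
  rcases eq_or_ne (∏ i ∈ s, f i) 0 with h | h
  · simp [h]
  have hf := prod_ne_zero_iff.mp h
  set M := s.sup (fun i => padicValNat p (f i))
  calc padicValNat p (∏ i ∈ s, f i)
      = ∑ i ∈ s, #{j ∈ Ico 1 (M + 1) | p ^ j ∣ f i} := by
        rw [padicValNat_finset_prod hf]
        refine sum_congr rfl fun i hi => padicValNat_eq_card_pow_dvd (hf i hi) ?_
        exact Nat.lt_add_one_of_le (le_sup (f := fun i => padicValNat p (f i)) hi)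
    _ = ∑ j ∈ Ico 1 (M + 1), #{i ∈ s | p ^ j ∣ f i} := by
        simp only [card_filter]
        exact sum_comm
    _ ≤ ∑ j ∈ Ico 1 (M + 1), (n / p ^ j + 1) := sum_le_sum fun j _ => hcount j
    _ = ∑ j ∈ Ico 1 (M + 1), n / p ^ j + M := by simp [sum_add_distrib]
    _ ≤ padicValNat p n ! + M := by
        gcongr
        exact sum_Ico_div_pow_le_padicValNat_factorial n _

end

theorem stmt6_general (n a b : ℕ) (hnb : Nat.gcd n.factorial b = 1)
    (p : ℕ) (hp : p.Prime) (hpn : p ∣ n.factorial) :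
    padicValNat p ((∏ i ∈ Finset.Icc 1 n, (a + b * i)) / n.factorial) ≤
      (Finset.Icc 1 n).sup (fun i => padicValNat p (a + b * i)) := by
  have : Fact p.Prime := ⟨hp⟩
  have hpb : Coprime p b := Coprime.coprime_dvd_left hpn hnb
  rw [padicValNat.div_of_dvd (factorial_dvd_prod_add_mul n a b hnb), tsub_le_iff_left]
  exact padicValNat_prod_le_factorial_add_sup _ _ n fun j =>
    card_filter_dvd_add_mul_le n a b (p ^ j) (hpb.pow_left j)

theorem stmt6 (n a b : ℕ) (hn : 0 < n) (ha : 0 < a) (hb : 0 < b)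
    (hab : Nat.gcd a b = 1) (hnb : Nat.gcd n.factorial b = 1)
    (p : ℕ) (hp : p.Prime) (hpn : p ∣ n.factorial) :
    padicValNat p ((∏ i ∈ Finset.Icc 1 n, (a + b * i)) / n.factorial) ≤
      (Finset.Icc 1 n).sup (fun i => padicValNat p (a + b * i)) :=
  stmt6_general n a b hnb p hp hpn
end

section
/- For every positive integer n > 1 and positive integers a, b with gcd(a, b) = 1, the rational number (a+b)(a+2b)···(a+nb)/n! can be written in lowest terms as P/Q where gcd(P, Q) = 1 and P admits a representation P = ∏_{i=1}^n a_i with each a_i a positive integer dividing a + b·i and gcd(a_i, a_j) = 1 for all 1 ≤ i ≠ j ≤ n. -/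
/-!
Let `N = ∏ (a + b i)` and `P = N / gcd(N, n!)`. A prime `p` dividing `P` divides some term and
hence not `b`, so the terms divisible by `p^k` have pairwise congruent indices mod `p^k`: there
are at most `⌊n / p^k⌋ + 1` of them, and none once `k` exceeds the largest exponent `K` of `p`
in a single term. Summing over `k` gives `v_p(N) ≤ v_p(n!) + K`, so the whole `p`-part of `P`
divides one term. Sending every prime of `P` to such a term and letting `a_i` collect the prime
powers sent to `i` gives the pairwise coprime factorization.
-/

open Finset Nat

namespace Nat

theorem modEq_of_dvd_add_mul {q a b i j : ℕ} (hqb : Coprime q b) (hi : q ∣ a + b * i)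
    (hj : q ∣ a + b * j) : i ≡ j [MOD q] :=
  (((modEq_zero_iff_dvd.2 hi).trans (modEq_zero_iff_dvd.2 hj).symm).add_left_cancel' a
    ).cancel_left_of_coprime hqb

theorem card_le_div_add_one_of_modEq {s : Finset ℕ} {n q : ℕ} (hs : s ⊆ Icc 1 n)
    (hmod : ∀ i ∈ s, ∀ j ∈ s, i ≡ j [MOD q]) : #s ≤ n / q + 1 := by
  calc #s ≤ #(range (n / q + 1)) := by
        refine card_le_card_of_injOn (· / q) (fun i hi => ?_) fun i hi j hj hij => ?_
        · simpa [Nat.lt_succ_iff] using Nat.div_le_div_right (mem_Icc.1 (hs hi)).2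
        · rw [← div_add_mod i q, ← div_add_mod j q, show i / q = j / q from hij,
            show i % q = j % q from hmod i hi j hj]
    _ = n / q + 1 := card_range _

theorem card_filter_dvd_add_mul_le {q b : ℕ} (hqb : Coprime q b) (a n : ℕ) :
    #{i ∈ Icc 1 n | q ∣ a + b * i} ≤ n / q + 1 :=
  card_le_div_add_one_of_modEq (filter_subset _ _) fun _ hi _ hj =>
    modEq_of_dvd_add_mul hqb (mem_filter.1 hi).2 (mem_filter.1 hj).2

theorem factorization_prod_eq_sum_card {ι : Type*} {s : Finset ι} {g : ι → ℕ} {p B : ℕ}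
    (hp : p.Prime) (hg : ∀ i ∈ s, g i ≠ 0) (hB : ∀ i ∈ s, g i < p ^ B) :
    (∏ i ∈ s, g i).factorization p = ∑ k ∈ Ico 1 B, #{i ∈ s | p ^ k ∣ g i} := by
  rw [factorization_prod hg, Finsupp.finsetSum_apply]
  calc ∑ i ∈ s, (g i).factorization p = ∑ i ∈ s, #{k ∈ Ico 1 B | p ^ k ∣ g i} :=
        sum_congr rfl fun i hi =>
          factorization_eq_card_pow_dvd_of_lt hp (pos_of_ne_zero (hg i hi)) (hB i hi)
    _ = _ := by simp only [card_filter]; exact sum_comm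

theorem factorization_prod_add_mul_le {p a b n K : ℕ} (hp : p.Prime) (hpb : ¬ p ∣ b)
    (hK : ∀ i ∈ Icc 1 n, (a + b * i).factorization p ≤ K) :
    (∏ i ∈ Icc 1 n, (a + b * i)).factorization p ≤ n.factorial.factorization p + K := by
  have hb : b ≠ 0 := by rintro rfl; exact hpb (dvd_zero p)
  set B := a + b * n + n + 1
  have hBp : B < p ^ B := Nat.lt_pow_self hp.one_lt
  have hterm : ∀ i ∈ Icc 1 n, a + b * i ≠ 0 ∧ a + b * i < p ^ B := fun i hi => by
    have := Nat.mul_le_mul_left b (mem_Icc.1 hi).2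
    have := Nat.mul_le_mul_left b (mem_Icc.1 hi).1
    constructor <;> omega
  have hcount : ∀ k ∈ Ico 1 B,
      #{i ∈ Icc 1 n | p ^ k ∣ a + b * i} ≤ n / p ^ k + if k ≤ K then 1 else 0 := by
    intro k _
    split_ifs with hkK
    · exact card_filter_dvd_add_mul_le ((hp.coprime_iff_not_dvd.2 hpb).pow_left k) a n
    · refine (Finset.card_eq_zero.2 (filter_eq_empty_iff.2 fun i hi hdvd => hkK ?_)).trans_le
        (zero_le _)
      exact ((hp.pow_dvd_iff_le_factorization (hterm i hi).1).1 hdvd).trans (hK i hi)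
  have hsmall : #{k ∈ Ico 1 B | k ≤ K} ≤ K :=
    (card_le_card fun k hk => by simp only [mem_filter, mem_Ico, mem_Ioc] at hk ⊢; omega).trans
      (card_Ioc 0 K).le
  have hlog : log p n < B := (log_le_self p n).trans_lt (by omega)
  rw [factorization_prod_eq_sum_card hp (fun i hi => (hterm i hi).1) fun i hi => (hterm i hi).2,
    factorization_factorial hp hlog]
  calc _ ≤ ∑ k ∈ Ico 1 B, (n / p ^ k + if k ≤ K then 1 else 0) := sum_le_sum hcount
    _ = ∑ k ∈ Ico 1 B, n / p ^ k + #{k ∈ Ico 1 B | k ≤ K} := by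
          rw [sum_add_distrib, sum_boole, Nat.cast_id]
    _ ≤ _ := by gcongr

theorem factorization_div_gcd {m n : ℕ} (hm : m ≠ 0) (hn : n ≠ 0) (p : ℕ) :
    (m / gcd m n).factorization p = m.factorization p - n.factorization p := by
  rw [factorization_div (gcd_dvd_left m n), factorization_gcd hm hn]
  exact tsub_min

theorem exists_pairwise_coprime_prod_eq_of_ordProj_dvd {ι : Type*} {s : Finset ι} {g : ι → ℕ}
    {m : ℕ} (hm : m ≠ 0) (h : ∀ p ∈ m.primeFactors, ∃ i ∈ s, ordProj[p] m ∣ g i) :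
    ∃ f : ι → ℕ, m = ∏ i ∈ s, f i ∧ (∀ i, 0 < f i) ∧ (∀ i ∈ s, f i ∣ g i) ∧
      Pairwise (Function.onFun Coprime f) := by
  classical
  choose σ hσs hσg using h
  have hcop : ∀ p q : m.primeFactors, p ≠ q → Coprime (ordProj[p] m) (ordProj[q] m) :=
    fun p q hpq => coprime_pow_primes _ _ (prime_of_mem_primeFactors p.2)
      (prime_of_mem_primeFactors q.2) (Subtype.coe_ne_coe.2 hpq)
  set τ : m.primeFactors → ι := fun p => σ p p.2
  refine ⟨fun i => ∏ p ∈ m.primeFactors.attach with τ p = i, ordProj[p.1] m, ?_,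
    fun i => prod_pos fun p _ => pow_pos (prime_of_mem_primeFactors p.2).pos _,
    fun i _ => ?_, fun i j hij => ?_⟩
  · beta_reduce
    rw [prod_fiberwise_of_maps_to (g := τ) (fun p _ => hσs p.1 p.2),
      prod_attach m.primeFactors (fun p => ordProj[p] m)]
    exact prod_primeFactors_pow_factorization hm
  · refine prod_dvd_of_isRelPrime (fun p _ q _ hpq => coprime_iff_isRelPrime.1 (hcop p q hpq))
      fun p hp => (mem_filter.1 hp).2 ▸ hσg p.1 p.2
  · refine Coprime.prod_left fun p hp => Coprime.prod_right fun q hq => ?_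
    rw [mem_filter] at hp hq
    exact hcop p q fun hpq => hij (hp.2.symm.trans (hpq ▸ hq.2))

theorem exists_ordProj_dvd_add_mul {a b n p : ℕ} (hab : Coprime a b)
    (hp : p ∈ ((∏ i ∈ Icc 1 n, (a + b * i)) /
      gcd (∏ i ∈ Icc 1 n, (a + b * i)) n.factorial).primeFactors) :
    ∃ i ∈ Icc 1 n, ordProj[p] ((∏ i ∈ Icc 1 n, (a + b * i)) /
      gcd (∏ i ∈ Icc 1 n, (a + b * i)) n.factorial) ∣ a + b * i := by
  set N := ∏ i ∈ Icc 1 n, (a + b * i)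
  have hp' : p.Prime := prime_of_mem_primeFactors hp
  have hN : N ≠ 0 := by
    rintro hN
    simp [hN] at hp
  obtain ⟨j, hj, hpj⟩ := hp'.prime.exists_mem_finset_dvd
    ((dvd_of_mem_primeFactors hp).trans (div_dvd_of_dvd (gcd_dvd_left _ _)))
  have hpb : ¬ p ∣ b := fun hpb =>
    hp'.not_dvd_one (hab ▸ dvd_gcd ((Nat.dvd_add_left (hpb.mul_right j)).1 hpj) hpb)
  obtain ⟨i, hi, hmax⟩ :=
    exists_max_image (Icc 1 n) (fun i => (a + b * i).factorization p) ⟨j, hj⟩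
  refine ⟨i, hi, (pow_dvd_pow p ?_).trans (ordProj_dvd _ p)⟩
  have : N.factorization p ≤ n.factorial.factorization p + (a + b * i).factorization p :=
    factorization_prod_add_mul_le hp' hpb hmax
  rw [factorization_div_gcd hN (factorial_ne_zero n)]
  omega

end Nat

theorem stmt8_general (n a b : ℕ) (ha : 0 < a)
    (hab : Nat.gcd a b = 1) :
    ∃ P Q : ℕ, 0 < P ∧ 0 < Q ∧ Nat.Coprime P Q ∧
      P * n.factorial = Q * ∏ i ∈ Finset.Icc 1 n, (a + b * i) ∧
      ∃ f : ℕ → ℕ,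
        P = ∏ i ∈ Finset.Icc 1 n, f i ∧
        (∀ i ∈ Finset.Icc 1 n, 0 < f i ∧ f i ∣ a + b * i) ∧
        (∀ i ∈ Finset.Icc 1 n, ∀ j ∈ Finset.Icc 1 n, i ≠ j →
          Nat.gcd (f i) (f j) = 1) := by
  set N := ∏ i ∈ Icc 1 n, (a + b * i)
  have hN : 0 < N := prod_pos fun i _ => by positivity
  have hd : 0 < Nat.gcd N n.factorial := gcd_pos_of_pos_left _ hN
  obtain ⟨f, hPf, hf_pos, hf_dvd, hf_coprime⟩ := exists_pairwise_coprime_prod_eq_of_ordProj_dvd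
    (Nat.div_pos (gcd_le_left _ hN) hd).ne' fun p hp => exists_ordProj_dvd_add_mul hab hp
  refine ⟨N / Nat.gcd N n.factorial, n.factorial / Nat.gcd N n.factorial,
    Nat.div_pos (gcd_le_left _ hN) hd, Nat.div_pos (gcd_le_right _ n.factorial_pos) hd,
    coprime_div_gcd_div_gcd hd, ?_, f, hPf, fun i hi => ⟨hf_pos i, hf_dvd i hi⟩,
    fun i _ j _ hij => hf_coprime hij⟩
  rw [Nat.div_mul_right_comm (Nat.gcd_dvd_left _ _),
    Nat.div_mul_right_comm (Nat.gcd_dvd_right _ _), mul_comm]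

theorem stmt8 (n a b : ℕ) (hn : 1 < n) (ha : 0 < a) (hb : 0 < b)
    (hab : Nat.gcd a b = 1) :
    ∃ P Q : ℕ, 0 < P ∧ 0 < Q ∧ Nat.Coprime P Q ∧
      P * n.factorial = Q * ∏ i ∈ Finset.Icc 1 n, (a + b * i) ∧
      ∃ f : ℕ → ℕ,
        P = ∏ i ∈ Finset.Icc 1 n, f i ∧
        (∀ i ∈ Finset.Icc 1 n, 0 < f i ∧ f i ∣ a + b * i) ∧
        (∀ i ∈ Finset.Icc 1 n, ∀ j ∈ Finset.Icc 1 n, i ≠ j →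
          Nat.gcd (f i) (f j) = 1) :=
  stmt8_general n a b ha hab
end

section
/- For every positive integer n > 1 and positive integers a, b with gcd(a, b) = 1 and gcd(n!, b) = 1, if none of the integers a + b·i for i = 1, ..., n divides lcm(1, 2, ..., n-1), then the product (a+b)(a+2b)···(a+nb) has at least n distinct prime factors. -/
/-!
Each term `a + b * i` fails to divide `lcm(1, …, n - 1)`, so some prime power `p ^ v` exactly
dividing it is at least `n`. Such a prime cannot serve two terms `a + b * i`, `a + b * j`: the
smaller of the two prime powers would divide both, hence (being coprime to `b`) divide `j - i`,
which is positive and less than `n`. So the terms have pairwise distinct large prime factors.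
-/

open Finset

theorem Nat.dvd_lcm_Icc_of_forall_ordProj_le {m k : ℕ} (hm : m ≠ 0)
    (h : ∀ p ∈ m.primeFactors, p ^ m.factorization p ≤ k) : m ∣ (Icc 1 k).lcm id := by
  have hL : (Icc 1 k).lcm id ≠ 0 := by simp [Finset.lcm_eq_zero_iff]
  rw [← Nat.factorization_le_iff_dvd hm hL]
  intro p
  by_cases hp : p ∈ m.primeFactors
  · rw [← (Nat.prime_of_mem_primeFactors hp).pow_dvd_iff_le_factorization hL]
    exact Finset.dvd_lcm (mem_Icc.2 ⟨Nat.ordProj_pos m p, h p hp⟩)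
  · rw [← Nat.support_factorization, Finsupp.notMem_support_iff] at hp
    simp [hp]

theorem Nat.exists_ordProj_gt_of_not_dvd_lcm_Icc {m k : ℕ} (hm : m ≠ 0)
    (h : ¬ m ∣ (Icc 1 k).lcm id) : ∃ p ∈ m.primeFactors, k < p ^ m.factorization p := by
  contrapose! h
  exact Nat.dvd_lcm_Icc_of_forall_ordProj_le hm h

theorem Nat.dvd_sub_of_dvd_add_mul {q a b i j : ℕ} (hqb : q.Coprime b) (hij : i ≤ j)
    (hi : q ∣ a + b * i) (hj : q ∣ a + b * j) : q ∣ j - i := by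
  have hmod : a + b * i ≡ a + b * j [MOD q] :=
    (Nat.modEq_zero_iff_dvd.2 hi).trans (Nat.modEq_zero_iff_dvd.2 hj).symm
  exact (Nat.modEq_iff_dvd' hij).1 ((hmod.add_left_cancel' a).cancel_left_of_coprime hqb)

theorem Nat.eq_of_dvd_add_mul_of_le {q a b i j n : ℕ} (hqb : q.Coprime b)
    (hi : i ∈ Icc 1 n) (hj : j ∈ Icc 1 n) (hqi : q ∣ a + b * i) (hqj : q ∣ a + b * j)
    (hnq : n ≤ q) : i = j := by
  rw [mem_Icc] at hi hj
  wlog hij : i ≤ j generalizing i j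
  · exact (this hj hi hqj hqi (le_of_not_ge hij)).symm
  have := Nat.eq_zero_of_dvd_of_lt (Nat.dvd_sub_of_dvd_add_mul hqb hij hqi hqj) (by omega)
  omega

theorem Nat.eq_of_ordProj_add_mul_gt {p a b i j n : ℕ} (hab : a.Coprime b)
    (hi : i ∈ Icc 1 n) (hj : j ∈ Icc 1 n)
    (hni : n - 1 < p ^ (a + b * i).factorization p)
    (hnj : n - 1 < p ^ (a + b * j).factorization p) : i = j := by
  obtain ⟨e, hei, hej, hne⟩ : ∃ e, p ^ e ∣ a + b * i ∧ p ^ e ∣ a + b * j ∧ n ≤ p ^ e := by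
    wlog hle : (a + b * i).factorization p ≤ (a + b * j).factorization p generalizing i j
    · obtain ⟨e, hej, hei, hne⟩ := this hj hi hnj hni (le_of_not_ge hle)
      exact ⟨e, hei, hej, hne⟩
    exact ⟨_, Nat.ordProj_dvd _ p, (pow_dvd_pow p hle).trans (Nat.ordProj_dvd _ p), by omega⟩
  have hcop : (p ^ e).Coprime b :=
    Nat.Coprime.coprime_dvd_left hei ((Nat.coprime_add_mul_left_left a b i).2 hab)
  exact Nat.eq_of_dvd_add_mul_of_le hcop hi hj hei hej hne

theorem stmt10_general (n a b : ℕ) (hb : 0 < b)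
    (hab : Nat.gcd a b = 1)
    (hnd : ∀ i ∈ Finset.Icc 1 n, ¬ (a + b * i ∣ (Finset.Icc 1 (n - 1)).lcm id)) :
    n ≤ (∏ i ∈ Finset.Icc 1 n, (a + b * i)).primeFactors.card := by
  have hterm : ∀ i ∈ Icc 1 n, a + b * i ≠ 0 := fun i hi => by
    have := (mem_Icc.1 hi).1
    positivity
  have hprod : ∏ i ∈ Icc 1 n, (a + b * i) ≠ 0 := prod_ne_zero_iff.2 hterm
  calc n = #(Icc 1 n) := by simp
    _ ≤ _ := by
      refine card_le_card_of_forall_subsingleton (fun i p => p ∈ (a + b * i).primeFactors ∧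
        n - 1 < p ^ (a + b * i).factorization p) (fun i hi => ?_) ?_
      · obtain ⟨p, hp, hlt⟩ := Nat.exists_ordProj_gt_of_not_dvd_lcm_Icc (hterm i hi) (hnd i hi)
        exact ⟨p, Nat.primeFactors_mono (dvd_prod_of_mem _ hi) hprod hp, hp, hlt⟩
      · rintro p - i ⟨hi, -, hni⟩ j ⟨hj, -, hnj⟩
        exact Nat.eq_of_ordProj_add_mul_gt hab hi hj hni hnj

theorem stmt10 (n a b : ℕ) (hn : 1 < n) (ha : 0 < a) (hb : 0 < b)
    (hab : Nat.gcd a b = 1) (hnb : Nat.gcd n.factorial b = 1)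
    (hnd : ∀ i ∈ Finset.Icc 1 n, ¬ (a + b * i ∣ (Finset.Icc 1 (n - 1)).lcm id)) :
    n ≤ (∏ i ∈ Finset.Icc 1 n, (a + b * i)).primeFactors.card :=
  stmt10_general n a b hb hab hnd
end
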